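/- arXiv:2307.10202 — 6 statements merged into one kernel-verified Lean document; each statement's English description precedes it below -/
import Mathlib

section
/- Let E be a connected directed graph and let α : (F, φ) → (G, ψ) be a morphism of coverings of E (i.e., φ : F → E and ψ : G → E are covering maps of graphs and α : F → G is a graph homomorphism with ψ ∘ α = φ). Then α : F → G is itself a covering map, i.e., for every vertex v of F the induced maps on the sets of edges with source v (respectively range v) are bijections onto the corresponding sets at α(v). -/
/-- A directed graph: vertices, edges, source and range maps. -/
structure DGraph where
  V : Type
  E : Type
  s : E → V
  r : E → V

/-- A homomorphism of directed graphs. -/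
structure GraphHom (F E : DGraph) where
  v : F.V → E.V
  e : F.E → E.E
  hs : ∀ f, E.s (e f) = v (F.s f)
  hr : ∀ f, E.r (e f) = v (F.r f)

def GraphHom.id (F : DGraph) : GraphHom F F where
  v := fun x => x
  e := fun x => x
  hs := fun _ => rfl
  hr := fun _ => rfl

def GraphHom.comp {F G E : DGraph} (ψ : GraphHom G E) (α : GraphHom F G) :
    GraphHom F E where
  v := ψ.v ∘ α.v
  e := ψ.e ∘ α.e
  hs f := by simp [Function.comp, ψ.hs, α.hs]
  hr f := by simp [Function.comp, ψ.hr, α.hr]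

/-- Edges of the double graph: `inl e` is `e`, `inr e` is the reversed edge `e*`. -/
abbrev DE (G : DGraph) := G.E ⊕ G.E

/-- Source of an edge of the double graph. -/
def DGraph.ds (G : DGraph) : DE G → G.V := Sum.elim G.s G.r

/-- Range of an edge of the double graph. -/
def DGraph.dr (G : DGraph) : DE G → G.V := Sum.elim G.r G.s

/-- `IsWalk G u l v` : the list `l` of double-graph edges is a walk from `u` to `v`. -/
def IsWalk (G : DGraph) : G.V → List (DE G) → G.V → Prop
  | u, [], v => u = v
  | u, x :: l, v => G.ds x = u ∧ IsWalk G (G.dr x) l v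

/-- A graph is connected if any two vertices are joined by a walk. -/
def DGraph.Connected (G : DGraph) : Prop := ∀ u v : G.V, ∃ l, IsWalk G u l v

/-- A graph homomorphism is a covering if it is bijective on the sets of edges
with a given source (resp. a given range). -/
def IsCovering {F E : DGraph} (φ : GraphHom F E) : Prop :=
  (∀ w : F.V, Set.BijOn φ.e {f | F.s f = w} {g | E.s g = φ.v w}) ∧
  (∀ w : F.V, Set.BijOn φ.e {f | F.r f = w} {g | E.r g = φ.v w})

/-- The reversal involution on double-graph edges. -/
def DGraph.bar (G : DGraph) : DE G → DE G := Sum.swap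

/-- Action of a graph homomorphism on double-graph edges. -/
def mapD {F E : DGraph} (φ : GraphHom F E) : DE F → DE E := Sum.map φ.e φ.e

/-- A walk is reduced if it contains no spur `e e*` or `e* e`. -/
def Reduced {G : DGraph} (l : List (DE G)) : Prop :=
  List.Chain' (fun x y => y ≠ G.bar x) l

open scoped Classical in
/-- The reduction of a walk, deleting spurs until none remain. -/
noncomputable def red {G : DGraph} : List (DE G) → List (DE G)
  | [] => []
  | x :: l =>
    match red l with
    | [] => [x]
    | y :: l' => if y = G.bar x then l' else x :: y :: l'

/-- A graph is a tree if between any two vertices there is exactly one reduced walk. -/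
def DGraph.IsTree (G : DGraph) : Prop :=
  ∀ u v : G.V, ∃! l : List (DE G), IsWalk G u l v ∧ Reduced l

/-- A covering is universal if it maps onto every (connected) covering. -/
def IsUniversal {F E : DGraph} (φ : GraphHom F E) : Prop :=
  ∀ (G : DGraph) (ψ : GraphHom G E), G.Connected → IsCovering ψ →
    ∃ α : GraphHom F G, ψ.comp α = φ

theorem Set.BijOn.of_comp_of_bijOn_left {α β γ : Type*} {f : α → β} {g : β → γ}
    {s : Set α} {t : Set β} {p : Set γ}
    (hgf : BijOn (g ∘ f) s p) (hg : BijOn g t p) (hf : MapsTo f s t) : BijOn f s t := by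
  refine ⟨hf, hgf.injOn.of_comp, fun y hy => ?_⟩
  obtain ⟨x, hx, hxy⟩ := hgf.surjOn (hg.mapsTo hy)
  exact ⟨x, hx, hg.injOn (hf hx) hy hxy⟩

theorem GraphHom.mapsTo_source {F G : DGraph} (α : GraphHom F G) (w : F.V) :
    Set.MapsTo α.e {f | F.s f = w} {g | G.s g = α.v w} :=
  fun f hf => (α.hs f).trans (congrArg α.v hf)

theorem GraphHom.mapsTo_range {F G : DGraph} (α : GraphHom F G) (w : F.V) :
    Set.MapsTo α.e {f | F.r f = w} {g | G.r g = α.v w} :=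
  fun f hf => (α.hr f).trans (congrArg α.v hf)

theorem IsCovering.of_comp {E F G : DGraph} {ψ : GraphHom G E} {α : GraphHom F G}
    (hψα : IsCovering (ψ.comp α)) (hψ : IsCovering ψ) : IsCovering α :=
  ⟨fun w => Set.BijOn.of_comp_of_bijOn_left (g := ψ.e) (hψα.1 w) (hψ.1 (α.v w))
      (α.mapsTo_source w),
    fun w => Set.BijOn.of_comp_of_bijOn_left (g := ψ.e) (hψα.2 w) (hψ.2 (α.v w))
      (α.mapsTo_range w)⟩

theorem stmt_0_general {E F G : DGraph}
    (φ : GraphHom F E) (ψ : GraphHom G E) (α : GraphHom F G)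
    (hφ : IsCovering φ) (hψ : IsCovering ψ) (hcomm : ψ.comp α = φ) :
    IsCovering α := by
  subst hcomm
  exact hφ.of_comp hψ

/-- Lemma 2.2: a morphism of coverings of a connected graph is itself a covering. -/
theorem stmt_0 {E F G : DGraph} (hE : E.Connected) (hF : F.Connected) (hG : G.Connected)
    (φ : GraphHom F E) (ψ : GraphHom G E) (α : GraphHom F G)
    (hφ : IsCovering φ) (hψ : IsCovering ψ) (hcomm : ψ.comp α = φ) :
    IsCovering α :=
  stmt_0_general φ ψ α hφ hψ hcomm
end

section
/- Let (F, φ) be a representation graph for a finitely bi-separated graph Ė = (E, C, D). If q and q' are walks in F with φ(q) = φ(q') and either s(q) = s(q') or r(q) = r(q'), then q = q'. -/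
/-- A (finitely) bi-separated graph `Ed = (E, C, D)`: a directed graph `E` together with
partitions `C_v` of `s⁻¹(v)` and `D_v` of `r⁻¹(v)` into finite nonempty blocks, such
that any block of `C` meets any block of `D` in at most one edge. -/
structure BisepGraph where
  G : DGraph
  C : Set (Set G.E)
  D : Set (Set G.E)
  hCne : ∀ X ∈ C, X.Nonempty
  hDne : ∀ Y ∈ D, Y.Nonempty
  hCs : ∀ X ∈ C, ∀ e ∈ X, ∀ f ∈ X, G.s e = G.s f
  hDr : ∀ Y ∈ D, ∀ e ∈ Y, ∀ f ∈ Y, G.r e = G.r f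
  hCpart : ∀ e : G.E, ∃! X, X ∈ C ∧ e ∈ X
  hDpart : ∀ e : G.E, ∃! Y, Y ∈ D ∧ e ∈ Y
  hCfin : ∀ X ∈ C, X.Finite
  hDfin : ∀ Y ∈ D, Y.Finite
  hCD : ∀ X ∈ C, ∀ Y ∈ D, Set.Subsingleton (X ∩ Y)

/-- A representation graph `(F, φ)` for the bi-separated graph `Ed`: for every vertex
`w` of `F` and every block `X ∈ C` (resp. `Y ∈ D`) based at `φ(w)` there is exactly
one edge of `F` with source (resp. range) `w` whose `φ`-image lies in `X` (resp. `Y`). -/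
def IsRepGraph (Ed : BisepGraph) (F : DGraph) (φ : GraphHom F Ed.G) : Prop :=
  (∀ w : F.V, ∀ X ∈ Ed.C, (∀ e ∈ X, Ed.G.s e = φ.v w) →
      ∃! f : F.E, F.s f = w ∧ φ.e f ∈ X) ∧
  (∀ w : F.V, ∀ Y ∈ Ed.D, (∀ e ∈ Y, Ed.G.r e = φ.v w) →
      ∃! f : F.E, F.r f = w ∧ φ.e f ∈ Y)

/-- The image `φ(Walk_u(F))` of the set of walks of `F` starting at `u`: a walk of `E`
is recorded as a pair (starting vertex, list of double-graph edges). -/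
def WalkImg {F E : DGraph} (φ : GraphHom F E) (u : F.V) : Set (E.V × List (DE E)) :=
  {pm | ∃ l v, IsWalk F u l v ∧ pm = (φ.v u, List.map (mapD φ) l)}

/-- A representation graph is irreducible if distinct vertices have distinct
images of based walk sets. -/
def IrreducibleRep {F E : DGraph} (φ : GraphHom F E) : Prop :=
  ∀ u v : F.V, u ≠ v → WalkImg φ u ≠ WalkImg φ v

/-!
At each vertex of a representation graph, an edge is determined by its source (or range) and
its image: the `C`-block (resp. `D`-block) containing the image has exactly one lift there.
Walking along two walks with the same image from a common source therefore gives the same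
edges step by step; for a common range, apply this to the reversed walks.
-/

section Walks

variable {G : DGraph}

theorem IsWalk.append {u w v : G.V} {l₁ l₂ : List (DE G)} (h₁ : IsWalk G u l₁ w)
    (h₂ : IsWalk G w l₂ v) : IsWalk G u (l₁ ++ l₂) v := by
  induction l₁ generalizing u with
  | nil => exact (show u = w from h₁) ▸ h₂
  | cons x l₁ ih => exact ⟨h₁.1, ih h₁.2⟩

theorem DGraph.ds_bar (x : DE G) : G.ds (G.bar x) = G.dr x := by
  cases x <;> rfl

theorem DGraph.dr_bar (x : DE G) : G.dr (G.bar x) = G.ds x := by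
  cases x <;> rfl

theorem DGraph.bar_injective : Function.Injective G.bar :=
  Sum.swap_leftInverse.injective

theorem IsWalk.reverse {u v : G.V} {l : List (DE G)} (h : IsWalk G u l v) :
    IsWalk G v (l.reverse.map G.bar) u := by
  induction l generalizing u with
  | nil => exact (show u = v from h).symm
  | cons x l ih =>
    rw [List.reverse_cons, List.map_append]
    exact (ih h.2).append ⟨G.ds_bar x, by rw [G.dr_bar, h.1]; rfl⟩

theorem reverse_map_bar_injective :
    Function.Injective fun l : List (DE G) => l.reverse.map G.bar :=
  (List.map_injective_iff.mpr DGraph.bar_injective).comp List.reverse_injective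

theorem mapD_bar {F E : DGraph} (φ : GraphHom F E) (x : DE F) :
    mapD φ (F.bar x) = E.bar (mapD φ x) := by
  cases x <;> rfl

theorem map_mapD_reverse_map_bar {F E : DGraph} (φ : GraphHom F E) (l : List (DE F)) :
    (l.reverse.map F.bar).map (mapD φ) = (l.map (mapD φ)).reverse.map E.bar := by
  simp only [List.map_map, List.map_reverse, Function.comp_def, mapD_bar]

end Walks

namespace IsRepGraph

variable {Ed : BisepGraph} {F : DGraph} {φ : GraphHom F Ed.G}

theorem edge_eq_of_s_eq (hrep : IsRepGraph Ed F φ) {f f' : F.E}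
    (hs : F.s f = F.s f') (he : φ.e f = φ.e f') : f = f' := by
  obtain ⟨X, ⟨hX, hfX⟩, -⟩ := Ed.hCpart (φ.e f)
  obtain ⟨_, -, huniq⟩ := hrep.1 (F.s f) X hX fun e heX => by
    rw [Ed.hCs X hX e heX (φ.e f) hfX, φ.hs f]
  exact (huniq f ⟨rfl, hfX⟩).trans (huniq f' ⟨hs.symm, he ▸ hfX⟩).symm

theorem edge_eq_of_r_eq (hrep : IsRepGraph Ed F φ) {f f' : F.E}
    (hr : F.r f = F.r f') (he : φ.e f = φ.e f') : f = f' := by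
  obtain ⟨Y, ⟨hY, hfY⟩, -⟩ := Ed.hDpart (φ.e f)
  obtain ⟨_, -, huniq⟩ := hrep.2 (F.r f) Y hY fun e heY => by
    rw [Ed.hDr Y hY e heY (φ.e f) hfY, φ.hr f]
  exact (huniq f ⟨rfl, hfY⟩).trans (huniq f' ⟨hr.symm, he ▸ hfY⟩).symm

theorem eq_of_ds_eq_of_mapD_eq (hrep : IsRepGraph Ed F φ) {x x' : DE F}
    (hds : F.ds x = F.ds x') (hmap : mapD φ x = mapD φ x') : x = x' := by
  cases x <;> cases x' <;> simp only [mapD, Sum.map_inl, Sum.map_inr, reduceCtorEq,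
    Sum.inl.injEq, Sum.inr.injEq] at hmap ⊢
  · exact hrep.edge_eq_of_s_eq hds hmap
  · exact hrep.edge_eq_of_r_eq hds hmap

theorem walk_eq_of_source_eq (hrep : IsRepGraph Ed F φ) {u v v' : F.V}
    {l l' : List (DE F)} (hl : IsWalk F u l v) (hl' : IsWalk F u l' v')
    (himg : l.map (mapD φ) = l'.map (mapD φ)) : l = l' ∧ v = v' := by
  induction l generalizing u l' with
  | nil =>
    obtain rfl : l' = [] := List.map_eq_nil_iff.mp himg.symm
    exact ⟨rfl, (show u = v from hl).symm.trans hl'⟩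
  | cons x l ih =>
    obtain - | ⟨x', l'⟩ := l'
    · exact absurd himg (List.cons_ne_nil _ _)
    simp only [List.map_cons, List.cons.injEq] at himg
    obtain ⟨hx, himg⟩ := himg
    obtain rfl : x = x' := hrep.eq_of_ds_eq_of_mapD_eq (hl.1.trans hl'.1.symm) hx
    obtain ⟨rfl, hv⟩ := ih hl.2 hl'.2 himg
    exact ⟨rfl, hv⟩

theorem walk_eq_of_range_eq (hrep : IsRepGraph Ed F φ) {u u' v : F.V}
    {l l' : List (DE F)} (hl : IsWalk F u l v) (hl' : IsWalk F u' l' v)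
    (himg : l.map (mapD φ) = l'.map (mapD φ)) : l = l' ∧ u = u' := by
  obtain ⟨hrev, hu⟩ := hrep.walk_eq_of_source_eq hl.reverse hl'.reverse
    (by rw [map_mapD_reverse_map_bar, map_mapD_reverse_map_bar, himg])
  exact ⟨reverse_map_bar_injective hrev, hu⟩

end IsRepGraph

/-- Lemma 3.7: in a representation graph, two walks with the same `φ`-image and the
same source (or the same range) are equal. -/
theorem stmt_4 (Ed : BisepGraph) (F : DGraph) (φ : GraphHom F Ed.G)
    (hrep : IsRepGraph Ed F φ)
    (u u' v v' : F.V) (l l' : List (DE F))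
    (hl : IsWalk F u l v) (hl' : IsWalk F u' l' v')
    (himg : List.map (mapD φ) l = List.map (mapD φ) l')
    (hend : u = u' ∨ v = v') :
    l = l' ∧ u = u' ∧ v = v' := by
  rcases hend with rfl | rfl
  · obtain ⟨hll', hv⟩ := hrep.walk_eq_of_source_eq hl hl' himg
    exact ⟨hll', rfl, hv⟩
  · obtain ⟨hll', hu⟩ := hrep.walk_eq_of_range_eq hl hl' himg
    exact ⟨hll', hu, rfl⟩
end

section
/- Let (F, φ) and (G, ψ) be representation graphs for a finitely bi-separated graph Ė = (E, C, D), let u be a vertex of F and v a vertex of G. If φ(Walk_u(F)) ⊆ ψ(Walk_v(G)), where Walk_u denotes the set of walks starting at the given vertex, then φ(Walk_u(F)) = ψ(Walk_v(G)). -/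
/-!
The edges of the double graph leaving a vertex are partitioned into blocks (the `C`-blocks of
edges and the `D`-blocks of reversed edges), and a representation graph has exactly one edge
mapping into each block at each vertex. So every walk of `G` from `v` lifts to `F` from `u`,
edge by edge: for the next edge `x` of `G`, take the edge `y` of `F` at the current vertex in the
block of `ψ(x)`. The image of the extended walk of `F` is, by hypothesis, the image of a walk
of `G`; its last edge lies in the same block and leaves the same vertex as `x`, so it is `x`,
and `φ(y) = ψ(x)`.
-/

section DoubleGraph

variable {F E : DGraph} (φ : GraphHom F E)

@[simp]
lemma ds_mapD (y : DE F) : E.ds (mapD φ y) = φ.v (F.ds y) := by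
  cases y <;> simp [mapD, DGraph.ds, φ.hs, φ.hr]

@[simp]
lemma dr_mapD (y : DE F) : E.dr (mapD φ y) = φ.v (F.dr y) := by
  cases y <;> simp [mapD, DGraph.dr, φ.hs, φ.hr]

/-- The labels of `φ(Walk_u(F))`, forgetting the common starting vertex `φ(u)`. -/
def walkLabels (u : F.V) : Set (List (DE E)) :=
  {m | ∃ l w, IsWalk F u l w ∧ m = l.map (mapD φ)}

lemma mk_mem_walkImg {u : F.V} {a : E.V} {m : List (DE E)} :
    (a, m) ∈ WalkImg φ u ↔ a = φ.v u ∧ m ∈ walkLabels φ u := by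
  simp only [WalkImg, walkLabels, Set.mem_ofPred_eq, Prod.mk.injEq]
  constructor
  · rintro ⟨l, w, hl, rfl, rfl⟩
    exact ⟨rfl, l, w, hl, rfl⟩
  · rintro ⟨rfl, l, w, hl, rfl⟩
    exact ⟨l, w, hl, rfl, rfl⟩

lemma nil_mem_walkLabels (u : F.V) : [] ∈ walkLabels φ u :=
  ⟨[], u, rfl, rfl⟩

lemma cons_mem_walkLabels {u : F.V} {z : DE E} {m : List (DE E)} :
    z :: m ∈ walkLabels φ u ↔
      ∃ y, F.ds y = u ∧ mapD φ y = z ∧ m ∈ walkLabels φ (F.dr y) := by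
  constructor
  · rintro ⟨_ | ⟨y, l⟩, w, hl, hm⟩
    · cases hm
    · obtain ⟨rfl, rfl⟩ := List.cons.inj hm
      exact ⟨y, hl.1, rfl, l, w, hl.2, rfl⟩
  · rintro ⟨y, rfl, rfl, l, w, hl, rfl⟩
    exact ⟨y :: l, w, ⟨rfl, hl⟩, rfl⟩

end DoubleGraph

namespace BisepGraph

/-- The partitions `C` and `D` combined into one partition of the edges of the double graph
grouped by source: a `C`-block as a set of edges `e`, a `D`-block as a set of edges `e*`. -/
def dBlocks (Ed : BisepGraph) : Set (Set (DE Ed.G)) :=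
  {B | (∃ X ∈ Ed.C, B = Sum.inl '' X) ∨ ∃ Y ∈ Ed.D, B = Sum.inr '' Y}

lemma exists_mem_dBlocks (Ed : BisepGraph) (z : DE Ed.G) :
    ∃ B ∈ Ed.dBlocks, z ∈ B ∧ ∀ z' ∈ B, Ed.G.ds z' = Ed.G.ds z := by
  rcases z with e | e
  · obtain ⟨X, ⟨hX, heX⟩, -⟩ := Ed.hCpart e
    refine ⟨_, Or.inl ⟨X, hX, rfl⟩, Set.mem_image_of_mem _ heX, ?_⟩
    rintro _ ⟨e', he'X, rfl⟩
    exact Ed.hCs X hX e' he'X e heX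
  · obtain ⟨Y, ⟨hY, heY⟩, -⟩ := Ed.hDpart e
    refine ⟨_, Or.inr ⟨Y, hY, rfl⟩, Set.mem_image_of_mem _ heY, ?_⟩
    rintro _ ⟨e', he'Y, rfl⟩
    exact Ed.hDr Y hY e' he'Y e heY

end BisepGraph

namespace IsRepGraph

variable {Ed : BisepGraph} {F G : DGraph} {φ : GraphHom F Ed.G} {ψ : GraphHom G Ed.G}

lemma existsUnique_mapD_mem (hF : IsRepGraph Ed F φ) (w : F.V) {B : Set (DE Ed.G)}
    (hB : B ∈ Ed.dBlocks) (hBw : ∀ z ∈ B, Ed.G.ds z = φ.v w) :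
    ∃! y : DE F, F.ds y = w ∧ mapD φ y ∈ B := by
  rcases hB with ⟨X, hX, rfl⟩ | ⟨Y, hY, rfl⟩
  · obtain ⟨f, hf, huniq⟩ := hF.1 w X hX fun e he => hBw _ (Set.mem_image_of_mem _ he)
    refine ⟨Sum.inl f, ⟨hf.1, Set.mem_image_of_mem _ hf.2⟩, ?_⟩
    rintro (f' | f') ⟨hf', hf'X⟩ <;> simp only [mapD, Sum.map_inl, Sum.map_inr,
      Set.mem_image, Sum.inl.injEq, reduceCtorEq, exists_eq_right, and_false,
      exists_false] at hf'X
    exact congrArg Sum.inl (huniq f' ⟨hf', hf'X⟩)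
  · obtain ⟨f, hf, huniq⟩ := hF.2 w Y hY fun e he => hBw _ (Set.mem_image_of_mem _ he)
    refine ⟨Sum.inr f, ⟨hf.1, Set.mem_image_of_mem _ hf.2⟩, ?_⟩
    rintro (f' | f') ⟨hf', hf'Y⟩ <;> simp only [mapD, Sum.map_inl, Sum.map_inr,
      Set.mem_image, Sum.inr.injEq, reduceCtorEq, exists_eq_right, and_false,
      exists_false] at hf'Y
    exact congrArg Sum.inr (huniq f' ⟨hf', hf'Y⟩)

lemma exists_lift_of_walkLabels_subset (hF : IsRepGraph Ed F φ) (hG : IsRepGraph Ed G ψ)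
    {u : F.V} {v : G.V} (hbase : φ.v u = ψ.v v) (hsub : walkLabels φ u ⊆ walkLabels ψ v)
    {x : DE G} (hx : G.ds x = v) :
    ∃ y, F.ds y = u ∧ mapD φ y = mapD ψ x ∧
      walkLabels φ (F.dr y) ⊆ walkLabels ψ (G.dr x) := by
  obtain ⟨B, hB, hxB, hBds⟩ := Ed.exists_mem_dBlocks (mapD ψ x)
  have hBu : ∀ z ∈ B, Ed.G.ds z = φ.v u := by
    intro z hz
    rw [hBds z hz, ds_mapD, hx, hbase]
  obtain ⟨y, ⟨hyu, hyB⟩, -⟩ := hF.existsUnique_mapD_mem u hB hBu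
  have hlift : ∀ m ∈ walkLabels φ (F.dr y),
      mapD φ y = mapD ψ x ∧ m ∈ walkLabels ψ (G.dr x) := by
    intro m hm
    have hym : mapD φ y :: m ∈ walkLabels ψ v :=
      hsub ((cons_mem_walkLabels φ).2 ⟨y, hyu, rfl, hm⟩)
    obtain ⟨x', hx'v, hx'y, hm'⟩ := (cons_mem_walkLabels ψ).1 hym
    have hBv : ∀ z ∈ B, Ed.G.ds z = ψ.v v := hbase ▸ hBu
    obtain rfl : x' = x :=
      (hG.existsUnique_mapD_mem v hB hBv).unique ⟨hx'v, hx'y ▸ hyB⟩ ⟨hx, hxB⟩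
    exact ⟨hx'y.symm, hm'⟩
  exact ⟨y, hyu, (hlift [] (nil_mem_walkLabels φ _)).1, fun m hm => (hlift m hm).2⟩

lemma walkLabels_subset_of_subset (hF : IsRepGraph Ed F φ) (hG : IsRepGraph Ed G ψ)
    {m : List (DE Ed.G)} :
    ∀ {u : F.V} {v : G.V}, φ.v u = ψ.v v → walkLabels φ u ⊆ walkLabels ψ v →
      m ∈ walkLabels ψ v → m ∈ walkLabels φ u := by
  induction m with
  | nil => exact fun _ _ _ => nil_mem_walkLabels φ _
  | cons z m ih =>
    intro u v hbase hsub hzm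
    obtain ⟨x, hxv, rfl, hm⟩ := (cons_mem_walkLabels ψ).1 hzm
    obtain ⟨y, hyu, hyx, hsub'⟩ := exists_lift_of_walkLabels_subset hF hG hbase hsub hxv
    have hbase' : φ.v (F.dr y) = ψ.v (G.dr x) := by
      rw [← dr_mapD, ← dr_mapD, hyx]
    exact (cons_mem_walkLabels φ).2 ⟨y, hyu, hyx, ih hbase' hsub' hm⟩

end IsRepGraph

/-- Lemma 3.9: if `φ(Walk_u(F)) ⊆ ψ(Walk_v(G))` for representation graphs `(F,φ)` and
`(G,ψ)`, then `φ(Walk_u(F)) = ψ(Walk_v(G))`. -/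
theorem stmt_5 (Ed : BisepGraph) (F G : DGraph)
    (φ : GraphHom F Ed.G) (ψ : GraphHom G Ed.G)
    (hF : IsRepGraph Ed F φ) (hG : IsRepGraph Ed G ψ)
    (u : F.V) (v : G.V) (hsub : WalkImg φ u ⊆ WalkImg ψ v) :
    WalkImg φ u = WalkImg ψ v := by
  have hmem {m} (hm : m ∈ walkLabels φ u) : (φ.v u, m) ∈ WalkImg ψ v :=
    hsub ((mk_mem_walkImg φ).2 ⟨rfl, hm⟩)
  have hbase : φ.v u = ψ.v v := ((mk_mem_walkImg ψ).1 (hmem (nil_mem_walkLabels φ u))).1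
  have hlabels : walkLabels φ u ⊆ walkLabels ψ v := fun m hm =>
    ((mk_mem_walkImg ψ).1 (hmem hm)).2
  refine hsub.antisymm ?_
  rintro ⟨a, m⟩ h
  obtain ⟨rfl, hm⟩ := (mk_mem_walkImg ψ).1 h
  exact (mk_mem_walkImg φ).2 ⟨hbase.symm, hF.walkLabels_subset_of_subset hG hbase hlabels hm⟩
end

section
/- Let α : (F, φ) → (G, ψ) be a morphism of representation graphs for a finitely bi-separated graph Ė. Then (F, α) is a covering of G: for every vertex u of F, α restricts to bijections s⁻¹(u) → s⁻¹(α(u)) and r⁻¹(u) → r⁻¹(α(u)). -/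
/-!
Edges out of a vertex `w` of a representation graph correspond one-to-one to the `C`-blocks
based at `φ(w)`, via the block containing their image. Since `ψ ∘ α = φ`, the map `α` preserves
this labelling, so it is a bijection from the edges out of `w` onto the edges out of `α(w)`.
The statement for ranges is the one for sources in the reversed bi-separated graph.
-/

def DGraph.reverse (G : DGraph) : DGraph := ⟨G.V, G.E, G.r, G.s⟩

def GraphHom.reverse {F E : DGraph} (φ : GraphHom F E) : GraphHom F.reverse E.reverse :=
  ⟨φ.v, φ.e, φ.hr, φ.hs⟩

def BisepGraph.reverse (Ed : BisepGraph) : BisepGraph where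
  G := Ed.G.reverse
  C := Ed.D
  D := Ed.C
  hCne := Ed.hDne
  hDne := Ed.hCne
  hCs := Ed.hDr
  hDr := Ed.hCs
  hCpart := Ed.hDpart
  hDpart := Ed.hCpart
  hCfin := Ed.hDfin
  hDfin := Ed.hCfin
  hCD X hX Y hY := by
    rw [Set.inter_comm]
    exact Ed.hCD Y hY X hX

namespace IsRepGraph

variable {Ed : BisepGraph} {F : DGraph} {φ : GraphHom F Ed.G}

theorem reverse (hF : IsRepGraph Ed F φ) : IsRepGraph Ed.reverse F.reverse φ.reverse :=
  ⟨hF.2, hF.1⟩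

theorem eq_of_s_eq_of_mem (hF : IsRepGraph Ed F φ) {X : Set Ed.G.E} (hX : X ∈ Ed.C)
    {f₁ f₂ : F.E} (hs : F.s f₁ = F.s f₂) (h₁ : φ.e f₁ ∈ X) (h₂ : φ.e f₂ ∈ X) : f₁ = f₂ := by
  have hbase : ∀ e ∈ X, Ed.G.s e = φ.v (F.s f₁) := fun e he => by
    rw [Ed.hCs X hX e he _ h₁, φ.hs]
  exact (hF.1 _ X hX hbase).unique ⟨rfl, h₁⟩ ⟨hs.symm, h₂⟩

theorem exists_s_eq_of_mem (hF : IsRepGraph Ed F φ) {X : Set Ed.G.E} (hX : X ∈ Ed.C)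
    {e : Ed.G.E} (he : e ∈ X) {w : F.V} (hew : Ed.G.s e = φ.v w) :
    ∃ f, F.s f = w ∧ φ.e f ∈ X :=
  (hF.1 w X hX fun e' he' => (Ed.hCs X hX e' he' e he).trans hew).exists

end IsRepGraph

theorem bijOn_s_of_isRepGraph {Ed : BisepGraph} {F G : DGraph} {ψ : GraphHom G Ed.G}
    {α : GraphHom F G} (hF : IsRepGraph Ed F (ψ.comp α)) (hG : IsRepGraph Ed G ψ) (w : F.V) :
    Set.BijOn α.e {f | F.s f = w} {g | G.s g = α.v w} := by
  refine ⟨fun f (hf : F.s f = w) => (α.hs f).trans (congrArg α.v hf), ?_, ?_⟩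
  · intro f₁ (hf₁ : F.s f₁ = w) f₂ (hf₂ : F.s f₂ = w) hα
    obtain ⟨X, ⟨hX, h₁⟩, -⟩ := Ed.hCpart (ψ.e (α.e f₁))
    have h₂ : ψ.e (α.e f₂) ∈ X := hα ▸ h₁
    exact hF.eq_of_s_eq_of_mem hX (hf₁.trans hf₂.symm) h₁ h₂
  · intro g (hg : G.s g = α.v w)
    obtain ⟨X, ⟨hX, hgX⟩, -⟩ := Ed.hCpart (ψ.e g)
    obtain ⟨f, hf, hfX⟩ :=
      hF.exists_s_eq_of_mem hX hgX ((ψ.hs g).trans (congrArg ψ.v hg))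
    have hαf : G.s (α.e f) = G.s g := by rw [α.hs, hf, hg]
    exact ⟨f, hf, hG.eq_of_s_eq_of_mem hX hαf hfX hgX⟩

/-- Proposition 3.11: a morphism `α : (F,φ) → (G,ψ)` of representation graphs makes
`(F, α)` a covering of `G`. -/
theorem stmt_7 (Ed : BisepGraph) (F G : DGraph)
    (φ : GraphHom F Ed.G) (ψ : GraphHom G Ed.G)
    (hF : IsRepGraph Ed F φ) (hG : IsRepGraph Ed G ψ)
    (α : GraphHom F G) (hcomm : ψ.comp α = φ) :
    IsCovering α := by
  subst hcomm
  exact ⟨bijOn_s_of_isRepGraph hF hG,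
    bijOn_s_of_isRepGraph (α := α.reverse) hF.reverse hG.reverse⟩
end

section
/- Let G be a free group and K a field. Then the group algebra KG has no nontrivial idempotents: if x ∈ KG satisfies x² = x, then x = 0 or x = 1. -/
/-!
Free groups are locally indicable: by Nielsen–Schreier a nontrivial subgroup is free on a
nonempty basis, so it maps nontrivially to `ℤ`. Locally indicable groups have unique products
(the Burns–Hale argument): after translating `A` and `B` so that both contain `1`, a nontrivial
homomorphism to `ℤ` on the subgroup they generate grades the products `a * b`; the pairs of
maximal degree lie in strictly smaller sets, where a unique product exists by induction, and it
stays unique in `A * B`. Hence `K[G]` has no zero divisors, and `x * (1 - x) = 0` forces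
`x = 0` or `x = 1`.
-/

open Finset

def LocallyIndicable (G : Type*) [Group G] : Prop :=
  ∀ H : Subgroup G, H.FG → H ≠ ⊥ → ∃ φ : H →* Multiplicative ℤ, φ ≠ 1

theorem Finset.filter_eq_ssubset_of_ne {α β : Type*} [DecidableEq β] {s : Finset α} {f : α → β}
    {x y : α} (hx : x ∈ s) (hy : y ∈ s) (hxy : f x ≠ f y) (b : β) : {z ∈ s | f z = b} ⊂ s := by
  rw [filter_ssubset]
  by_cases hb : f x = b
  · exact ⟨y, hy, fun h => hxy (hb.trans h.symm)⟩
  · exact ⟨x, hx, hb⟩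

theorem UniqueMul.of_filter_eq_of_isMax {G M : Type*} [Mul G] [AddCommMonoid M] [PartialOrder M]
    [IsOrderedCancelAddMonoid M] [DecidableEq M] {A B : Finset G} {α β : G → M}
    (hαβ : ∀ a ∈ A, ∀ b ∈ B, ∀ a' ∈ A, ∀ b' ∈ B, a * b = a' * b' → α a + β b = α a' + β b')
    {a b : G} (ha : a ∈ A) (hb : b ∈ B) (hαa : ∀ x ∈ A, α x ≤ α a) (hβb : ∀ y ∈ B, β y ≤ β b)
    (hu : UniqueMul {x ∈ A | α x = α a} {y ∈ B | β y = β b} a b) :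
    UniqueMul A B a b := by
  intro x y hx hy hxy
  have hsum := hαβ x hx y hy a ha b hb hxy
  obtain ⟨hαx, hβy⟩ := (add_eq_add_iff_eq_and_eq (hαa x hx) (hβb y hy)).mp hsum
  exact hu (mem_filter.mpr ⟨hx, hαx⟩) (mem_filter.mpr ⟨hy, hβy⟩) hxy

theorem LocallyIndicable.exists_additiveOn_closure {G : Type*} [Group G] (hG : LocallyIndicable G)
    (S : Finset G) (hS : ∃ s ∈ S, s ≠ 1) :
    ∃ ψ : G → ℤ, (∀ x ∈ Subgroup.closure (S : Set G), ∀ y ∈ Subgroup.closure (S : Set G),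
      ψ (x * y) = ψ x + ψ y) ∧ ∃ s ∈ S, ψ s ≠ 0 := by
  classical
  set H := Subgroup.closure (S : Set G)
  have hH : H ≠ ⊥ := by
    obtain ⟨s, hs, hs1⟩ := hS
    exact fun h => hs1 ((Subgroup.eq_bot_iff_forall H).mp h s (Subgroup.subset_closure hs))
  obtain ⟨φ, hφ⟩ := hG H ⟨S, rfl⟩ hH
  refine ⟨fun g => if h : g ∈ H then (φ ⟨g, h⟩).toAdd else 0, fun x hx y hy => ?_, ?_⟩
  · simp only [dif_pos hx, dif_pos hy, dif_pos (H.mul_mem hx hy)]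
    rw [← toAdd_mul, ← map_mul]
    rfl
  · by_contra! h
    refine hφ (MonoidHom.eq_of_eqOn_dense Subgroup.closure_closure_coe_preimage fun s hs => ?_)
    have hs0 := h s hs
    rw [dif_pos s.2] at hs0
    simpa using hs0

theorem LocallyIndicable.exists_grading {G : Type*} [Group G] (hG : LocallyIndicable G)
    {A B : Finset G} (hA : A.Nonempty) (hB : B.Nonempty) (hAB : 1 < #A ∨ 1 < #B) :
    ∃ α β : G → ℤ,
      (∀ a ∈ A, ∀ b ∈ B, ∀ a' ∈ A, ∀ b' ∈ B, a * b = a' * b' → α a + β b = α a' + β b') ∧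
      ((∃ a ∈ A, ∃ a' ∈ A, α a ≠ α a') ∨ ∃ b ∈ B, ∃ b' ∈ B, β b ≠ β b') := by
  classical
  obtain ⟨a₀, ha₀⟩ := hA
  obtain ⟨b₀, hb₀⟩ := hB
  set S : Finset G := A.image (a₀⁻¹ * ·) ∪ B.image (· * b₀⁻¹)
  have hS : ∃ s ∈ S, s ≠ 1 := by
    rcases hAB with hA | hB
    · obtain ⟨a, ha, hne⟩ := exists_mem_ne hA a₀
      exact ⟨_, mem_union_left _ (mem_image_of_mem _ ha), by simpa [inv_mul_eq_one] using hne.symm⟩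
    · obtain ⟨b, hb, hne⟩ := exists_mem_ne hB b₀
      exact ⟨_, mem_union_right _ (mem_image_of_mem _ hb), by simpa [mul_inv_eq_one]⟩
  obtain ⟨ψ, hψ, s, hsS, hs⟩ := hG.exists_additiveOn_closure S hS
  have hψ1 : ψ 1 = 0 := by
    simpa using hψ 1 (Subgroup.one_mem _) 1 (Subgroup.one_mem _)
  have hAS : ∀ a ∈ A, a₀⁻¹ * a ∈ Subgroup.closure (S : Set G) := fun a ha =>
    Subgroup.subset_closure (mem_union_left _ (mem_image_of_mem _ ha))
  have hBS : ∀ b ∈ B, b * b₀⁻¹ ∈ Subgroup.closure (S : Set G) := fun b hb =>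
    Subgroup.subset_closure (mem_union_right _ (mem_image_of_mem _ hb))
  refine ⟨fun a => ψ (a₀⁻¹ * a), fun b => ψ (b * b₀⁻¹), ?_, ?_⟩
  · intro a ha b hb a' ha' b' hb' h
    rw [← hψ _ (hAS a ha) _ (hBS b hb), ← hψ _ (hAS a' ha') _ (hBS b' hb')]
    congr 1
    simp only [mul_assoc]
    rw [← mul_assoc a, h, mul_assoc]
  · rcases mem_union.mp hsS with hs' | hs' <;> obtain ⟨c, hc, rfl⟩ := mem_image.mp hs'
    · exact .inl ⟨c, hc, a₀, ha₀, by simpa [hψ1] using hs⟩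
    · exact .inr ⟨c, hc, b₀, hb₀, by simpa [hψ1] using hs⟩

theorem UniqueProds.of_locallyIndicable {G : Type*} [Group G] (hG : LocallyIndicable G) :
    UniqueProds G := by
  classical
  refine ⟨fun {A B} hA hB => ?_⟩
  induction hn : #A + #B using Nat.strong_induction_on generalizing A B with
  | _ n ih =>
  by_cases! hcard : #A ≤ 1 ∧ #B ≤ 1
  · exact UniqueMul.of_card_le_one hA hB hcard.1 hcard.2
  obtain ⟨α, β, hαβ, hne⟩ := hG.exists_grading hA hB (by omega)
  obtain ⟨a, ha, hαa⟩ := A.exists_max_image α hA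
  obtain ⟨b, hb, hβb⟩ := B.exists_max_image β hB
  have hlt : #{x ∈ A | α x = α a} + #{y ∈ B | β y = β b} < n := by
    have := card_filter_le A (α · = α a)
    have := card_filter_le B (β · = β b)
    rcases hne with ⟨x, hx, y, hy, hxy⟩ | ⟨x, hx, y, hy, hxy⟩
    · have := card_lt_card (filter_eq_ssubset_of_ne hx hy hxy (α a))
      omega
    · have := card_lt_card (filter_eq_ssubset_of_ne hx hy hxy (β b))
      omega
  obtain ⟨a₁, ha₁, b₁, hb₁, hu⟩ := ih _ hlt (A := {x ∈ A | α x = α a})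
    (B := {y ∈ B | β y = β b}) ⟨a, mem_filter.mpr ⟨ha, rfl⟩⟩ ⟨b, mem_filter.mpr ⟨hb, rfl⟩⟩ rfl
  rw [mem_filter] at ha₁ hb₁
  refine ⟨a₁, ha₁.1, b₁, hb₁.1, UniqueMul.of_filter_eq_of_isMax hαβ ha₁.1 hb₁.1
    (ha₁.2 ▸ hαa) (hb₁.2 ▸ hβb) (by rwa [ha₁.2, hb₁.2])⟩

theorem IsFreeGroup.exists_monoidHom_ne_one (F : Type*) [Group F] [IsFreeGroup F] [Nontrivial F] :
    ∃ φ : F →* Multiplicative ℤ, φ ≠ 1 := by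
  by_cases h : IsEmpty (IsFreeGroup.Generators F)
  · have : MonoidHom.id F = 1 := IsFreeGroup.ext_hom fun x => isEmptyElim x
    obtain ⟨g, hg⟩ := exists_ne (1 : F)
    exact absurd (DFunLike.congr_fun this g) hg
  · obtain ⟨x⟩ := not_isEmpty_iff.mp h
    refine ⟨IsFreeGroup.lift fun _ => Multiplicative.ofAdd 1, fun hφ => ?_⟩
    have := DFunLike.congr_fun hφ (IsFreeGroup.of x)
    simp [IsFreeGroup.lift_of] at this

theorem IsFreeGroup.locallyIndicable (G : Type*) [Group G] [IsFreeGroup G] : LocallyIndicable G :=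
  fun H _ hH =>
    haveI := (Subgroup.nontrivial_iff_ne_bot H).mpr hH
    IsFreeGroup.exists_monoidHom_ne_one H

/-- The group algebra of a free group over a field has no nontrivial idempotents:
any `x` with `x² = x` is `0` or `1`. -/
theorem stmt_17 {K : Type} [Field K] (G : Type) [Group G] [IsFreeGroup G]
    (x : MonoidAlgebra K G) (hx : x * x = x) :
    x = 0 ∨ x = 1 :=
  haveI := UniqueProds.of_locallyIndicable (IsFreeGroup.locallyIndicable G)
  IsIdempotentElem.iff_eq_zero_or_one.mp hx
end

section
/- Let Ė be a finitely bi-separated graph and S = (Q, {Q_v}, {S_e}, {R_e}, {ρ_e}) an Ė-algebraic branching system. Define, on the K-vector space W with basis Q, endomorphisms σ_v (projection onto span of Q_v), σ_e (q ↦ ρ_e(q) if q ∈ S_e, else 0), and σ_{e*} (q ↦ ρ_e⁻¹(q) if q ∈ R_e, else 0). Then {σ_v, σ_e, σ_{e*}} is an Ė-family, i.e., these endomorphisms satisfy: σ_u σ_v = δ_{uv} σ_u; σ_{s(e)} σ_e = σ_e = σ_e σ_{r(e)} and σ_{r(e)} σ_{e*} = σ_{e*} = σ_{e*} σ_{s(e)};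 Σ_{Y∈D} σ_{XY} σ_{(YX')*} = δ_{XX'} σ_{s(X)} for all X, X' ∈ C; and Σ_{X∈C} σ_{(YX)*} σ_{XY'} = δ_{YY'} σ_{r(Y)} for all Y, Y' ∈ D (with σ_0 = σ_{0*} = 0 and multiplication taken in End_K(W)^op). -/
/-- An `Ė`-algebraic branching system: pairwise disjoint sets `Q_v` covering `Q`,
sets `S_e` partitioning `Q_v` along each block `X ∈ C_v`, sets `R_e` partitioning
`Q_v` along each block `Y ∈ D_v`, and bijections `ρ_e : S_e → R_e`. -/
structure ABSObj (Ed : BisepGraph) where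
  Q : Type
  ne : Nonempty Q
  Qv : Ed.G.V → Set Q
  Se : Ed.G.E → Set Q
  Re : Ed.G.E → Set Q
  disj : ∀ u v : Ed.G.V, u ≠ v → Disjoint (Qv u) (Qv v)
  cover : ∀ q : Q, ∃ v, q ∈ Qv v
  hS : ∀ (v : Ed.G.V), ∀ X ∈ Ed.C, (∀ e ∈ X, Ed.G.s e = v) →
    (Qv v = ⋃ e ∈ X, Se e) ∧
      (∀ e ∈ X, ∀ f ∈ X, e ≠ f → Disjoint (Se e) (Se f))
  hR : ∀ (v : Ed.G.V), ∀ Y ∈ Ed.D, (∀ e ∈ Y, Ed.G.r e = v) →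
    (Qv v = ⋃ e ∈ Y, Re e) ∧
      (∀ e ∈ Y, ∀ f ∈ Y, e ≠ f → Disjoint (Re e) (Re f))
  ρ : ∀ e : Ed.G.E, (Se e) ≃ (Re e)

noncomputable section
open scoped Classical

/-- The endomorphism of the vector space with basis `α` determined by prescribed
images of the basis vectors. -/
def bEnd (K : Type) [Field K] {α : Type} (g : α → (α →₀ K)) :
    Module.End K (α →₀ K) :=
  Finsupp.lsum K fun w => LinearMap.toSpanSingleton K _ (g w)

variable (K : Type) [Field K] {Ed : BisepGraph} (A : ABSObj Ed)

/-- The operator `σ_v`: projection onto the span of `Q_v`, in `(End W)ᵒᵖ`. -/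
def tauV (v : Ed.G.V) : (Module.End K (A.Q →₀ K))ᵐᵒᵖ :=
  MulOpposite.op (bEnd K fun q => if q ∈ A.Qv v then Finsupp.single q 1 else 0)

/-- The operator `σ_e : q ↦ ρ_e(q)` for `q ∈ S_e`, else `0`, in `(End W)ᵒᵖ`. -/
def tauE (e : Ed.G.E) : (Module.End K (A.Q →₀ K))ᵐᵒᵖ :=
  MulOpposite.op (bEnd K fun q =>
    if h : q ∈ A.Se e then Finsupp.single ((A.ρ e ⟨q, h⟩ : A.Re e) : A.Q) 1 else 0)

/-- The operator `σ_{e*} : q ↦ ρ_e⁻¹(q)` for `q ∈ R_e`, else `0`, in `(End W)ᵒᵖ`. -/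
def tauS (e : Ed.G.E) : (Module.End K (A.Q →₀ K))ᵐᵒᵖ :=
  MulOpposite.op (bEnd K fun q =>
    if h : q ∈ A.Re e then Finsupp.single (((A.ρ e).symm ⟨q, h⟩ : A.Se e) : A.Q) 1
    else 0)

/-! The operators `σ_e` and `σ_{e*}` are partial permutations of the basis `Q`, and every
relation of an `Ė`-family is an identity between such partial permutations: `σ_e σ_{e*}` is
the projection onto `S_e`, a product of two of them vanishes as soon as the range of the
first misses the domain of the second, and projections onto the blocks of a partition of
`Q_v` add up to `σ_v`. The separation axioms of `Ė` and of the branching system supply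
exactly these disjointness and covering conditions. -/

section PartialPermutation

variable {α : Type}

def shiftOp {S R : Set α} (ρ : S ≃ R) : (Module.End K (α →₀ K))ᵐᵒᵖ :=
  MulOpposite.op (bEnd K fun q => if h : q ∈ S then Finsupp.single (ρ ⟨q, h⟩ : α) 1 else 0)

abbrev projOp (T : Set α) : (Module.End K (α →₀ K))ᵐᵒᵖ := shiftOp K (Equiv.refl T)

variable {K}

theorem shiftOp_unop_single {S R : Set α} (ρ : S ≃ R) (q : α) :
    (shiftOp K ρ).unop (Finsupp.single q 1) =
      if h : q ∈ S then Finsupp.single (ρ ⟨q, h⟩ : α) 1 else 0 := by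
  simp [shiftOp, bEnd]

theorem endOp_ext {x y : (Module.End K (α →₀ K))ᵐᵒᵖ}
    (h : ∀ q, x.unop (Finsupp.single q 1) = y.unop (Finsupp.single q 1)) : x = y := by
  refine MulOpposite.unop_injective (Finsupp.lhom_ext fun q b => ?_)
  rw [← Finsupp.smul_single_one, map_smul, map_smul, h]

theorem shiftOp_mul_shiftOp_of_disjoint {S R S' R' : Set α} (ρ : S ≃ R) (ρ' : S' ≃ R')
    (h : Disjoint R S') : shiftOp K ρ * shiftOp K ρ' = 0 := by
  refine endOp_ext fun q => ?_
  rw [MulOpposite.unop_mul, Module.End.mul_apply, shiftOp_unop_single]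
  split_ifs with hq
  · rw [shiftOp_unop_single, dif_neg (Set.disjoint_left.mp h (ρ ⟨q, hq⟩).2)]
    rfl
  · simp

theorem shiftOp_mul_shiftOp_symm {S R : Set α} (ρ : S ≃ R) :
    shiftOp K ρ * shiftOp K ρ.symm = projOp K S := by
  refine endOp_ext fun q => ?_
  rw [MulOpposite.unop_mul, Module.End.mul_apply, shiftOp_unop_single, shiftOp_unop_single]
  split_ifs with hq
  · rw [shiftOp_unop_single, dif_pos (ρ ⟨q, hq⟩).2]
    simp
  · simp

theorem projOp_mul_shiftOp {S R T : Set α} (ρ : S ≃ R) (h : S ⊆ T) :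
    projOp K T * shiftOp K ρ = shiftOp K ρ := by
  refine endOp_ext fun q => ?_
  rw [MulOpposite.unop_mul, Module.End.mul_apply, shiftOp_unop_single]
  split_ifs with hq
  · rfl
  · rw [shiftOp_unop_single, dif_neg fun hS => hq (h hS), map_zero]

theorem shiftOp_mul_projOp {S R T : Set α} (ρ : S ≃ R) (h : R ⊆ T) :
    shiftOp K ρ * projOp K T = shiftOp K ρ := by
  refine endOp_ext fun q => ?_
  rw [MulOpposite.unop_mul, Module.End.mul_apply, shiftOp_unop_single]
  split_ifs with hq
  · rw [shiftOp_unop_single, dif_pos (h (ρ ⟨q, hq⟩).2)]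
    rfl
  · rw [map_zero]

theorem sum_projOp_of_pairwiseDisjoint {ι : Type*} (s : Finset ι) {S : ι → Set α}
    (hS : (s : Set ι).PairwiseDisjoint S) :
    ∑ i ∈ s, projOp K (S i) = projOp K (⋃ i ∈ s, S i) := by
  refine endOp_ext fun q => ?_
  rw [Finset.unop_sum, LinearMap.sum_apply]
  simp only [shiftOp_unop_single, Equiv.refl_apply]
  by_cases hq : ∃ i ∈ s, q ∈ S i
  · obtain ⟨i, hi, hqi⟩ := hq
    rw [Finset.sum_eq_single_of_mem i hi, dif_pos hqi, dif_pos (Set.mem_iUnion₂_of_mem hi hqi)]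
    intro j hj hji
    exact dif_neg fun hqj => Set.disjoint_left.mp (hS hj hi hji) hqj hqi
  · push Not at hq
    rw [dif_neg (by simpa using hq)]
    exact Finset.sum_eq_zero fun i hi => dif_neg (hq i hi)

/-- The shape of both Cuntz–Krieger relations, with `P i j` read as "`i` and `j` lie in a
common block". -/
theorem sum_sum_ite_shiftOp_mul_symm {ι : Type*} (s s' : Finset ι) {S R : ι → Set α}
    (ρ : ∀ i, S i ≃ R i) (P : ι → ι → Prop) (hP : ∀ i ∈ s, P i i)
    (hR : ∀ i j, i ≠ j → P i j → Disjoint (R i) (R j)) :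
    (∑ i ∈ s, ∑ j ∈ s', if P i j then shiftOp K (ρ i) * shiftOp K (ρ j).symm else 0) =
      ∑ i ∈ s ∩ s', projOp K (S i) := by
  rw [← Finset.sum_ite_mem]
  refine Finset.sum_congr rfl fun i hi => ?_
  have hterm : ∀ j, (if P i j then shiftOp K (ρ i) * shiftOp K (ρ j).symm else 0) =
      if i = j then projOp K (S i) else 0 := by
    intro j
    by_cases hij : i = j
    · subst hij
      rw [if_pos (hP i hi), if_pos rfl, shiftOp_mul_shiftOp_symm]
    · rw [if_neg hij]
      split_ifs with hPij
      · exact shiftOp_mul_shiftOp_of_disjoint _ _ (hR i j hij hPij)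
      · rfl
  simp only [hterm, Finset.sum_ite_eq]

end PartialPermutation

namespace ABSObj

theorem Se_subset_Qv (e : Ed.G.E) : A.Se e ⊆ A.Qv (Ed.G.s e) := by
  obtain ⟨X, ⟨hX, heX⟩, -⟩ := Ed.hCpart e
  rw [(A.hS _ X hX fun f hf => Ed.hCs X hX f hf e heX).1]
  exact Set.subset_biUnion_of_mem heX

theorem Re_subset_Qv (e : Ed.G.E) : A.Re e ⊆ A.Qv (Ed.G.r e) := by
  obtain ⟨Y, ⟨hY, heY⟩, -⟩ := Ed.hDpart e
  rw [(A.hR _ Y hY fun f hf => Ed.hDr Y hY f hf e heY).1]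
  exact Set.subset_biUnion_of_mem heY

theorem disjoint_Se {X : Set Ed.G.E} (hX : X ∈ Ed.C) {e f : Ed.G.E} (he : e ∈ X) (hf : f ∈ X)
    (hef : e ≠ f) : Disjoint (A.Se e) (A.Se f) :=
  (A.hS _ X hX fun g hg => Ed.hCs X hX g hg e he).2 e he f hf hef

theorem disjoint_Re {Y : Set Ed.G.E} (hY : Y ∈ Ed.D) {e f : Ed.G.E} (he : e ∈ Y) (hf : f ∈ Y)
    (hef : e ≠ f) : Disjoint (A.Re e) (A.Re f) :=
  (A.hR _ Y hY fun g hg => Ed.hDr Y hY g hg e he).2 e he f hf hef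

end ABSObj

theorem tauV_eq_projOp (v : Ed.G.V) : tauV K A v = projOp K (A.Qv v) := rfl

theorem tauV_mul_tauV (u v : Ed.G.V) :
    tauV K A u * tauV K A v = if u = v then tauV K A u else 0 := by
  simp only [tauV_eq_projOp]
  split_ifs with huv
  · subst huv
    exact projOp_mul_shiftOp _ subset_rfl
  · exact shiftOp_mul_shiftOp_of_disjoint _ _ (A.disj u v huv)

theorem tauV_mul_tauE (e : Ed.G.E) : tauV K A (Ed.G.s e) * tauE K A e = tauE K A e := by
  rw [tauV_eq_projOp]
  exact projOp_mul_shiftOp _ (A.Se_subset_Qv e)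

theorem tauE_mul_tauV (e : Ed.G.E) : tauE K A e * tauV K A (Ed.G.r e) = tauE K A e := by
  rw [tauV_eq_projOp]
  exact shiftOp_mul_projOp _ (A.Re_subset_Qv e)

theorem tauV_mul_tauS (e : Ed.G.E) : tauV K A (Ed.G.r e) * tauS K A e = tauS K A e := by
  rw [tauV_eq_projOp]
  exact projOp_mul_shiftOp _ (A.Re_subset_Qv e)

theorem tauS_mul_tauV (e : Ed.G.E) : tauS K A e * tauV K A (Ed.G.s e) = tauS K A e := by
  rw [tauV_eq_projOp]
  exact shiftOp_mul_projOp _ (A.Se_subset_Qv e)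

theorem sum_sum_tauE_mul_tauS {X X' : Set Ed.G.E} (hX : X ∈ Ed.C) (hX' : X' ∈ Ed.C)
    {v : Ed.G.V} (hv : ∀ e ∈ X, Ed.G.s e = v) :
    (∑ e ∈ (Ed.hCfin X hX).toFinset, ∑ f ∈ (Ed.hCfin X' hX').toFinset,
        if ∃ Y ∈ Ed.D, e ∈ Y ∧ f ∈ Y then tauE K A e * tauS K A f else 0) =
      if X = X' then tauV K A v else 0 := by
  have hdiag (e : Ed.G.E) : ∃ Y ∈ Ed.D, e ∈ Y ∧ e ∈ Y := by
    obtain ⟨Y, ⟨hY, he⟩, -⟩ := Ed.hDpart e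
    exact ⟨Y, hY, he, he⟩
  refine (sum_sum_ite_shiftOp_mul_symm _ _ A.ρ _ (fun e _ => hdiag e)
    fun e f hef ⟨Y, hY, he, hf⟩ => A.disjoint_Re hY he hf hef).trans ?_
  split_ifs with hXX
  · subst hXX
    have hdisj : ((Ed.hCfin X hX).toFinset : Set Ed.G.E).PairwiseDisjoint A.Se := by
      rw [Set.Finite.coe_toFinset]
      exact fun e he f hf hef => A.disjoint_Se hX he hf hef
    rw [Finset.inter_self, sum_projOp_of_pairwiseDisjoint _ hdisj, tauV_eq_projOp,
      (A.hS v X hX hv).1]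
    simp only [Set.Finite.mem_toFinset]
  · refine Finset.sum_eq_zero fun e he => absurd ?_ hXX
    rw [Finset.mem_inter, Set.Finite.mem_toFinset, Set.Finite.mem_toFinset] at he
    exact (Ed.hCpart e).unique ⟨hX, he.1⟩ ⟨hX', he.2⟩

theorem sum_sum_tauS_mul_tauE {Y Y' : Set Ed.G.E} (hY : Y ∈ Ed.D) (hY' : Y' ∈ Ed.D)
    {v : Ed.G.V} (hv : ∀ e ∈ Y, Ed.G.r e = v) :
    (∑ e ∈ (Ed.hDfin Y hY).toFinset, ∑ f ∈ (Ed.hDfin Y' hY').toFinset,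
        if ∃ X ∈ Ed.C, e ∈ X ∧ f ∈ X then tauS K A e * tauE K A f else 0) =
      if Y = Y' then tauV K A v else 0 := by
  have hdiag (e : Ed.G.E) : ∃ X ∈ Ed.C, e ∈ X ∧ e ∈ X := by
    obtain ⟨X, ⟨hX, he⟩, -⟩ := Ed.hCpart e
    exact ⟨X, hX, he, he⟩
  -- `tauE K A f` is `shiftOp K (A.ρ f).symm.symm` up to structure eta
  refine (sum_sum_ite_shiftOp_mul_symm _ _ (fun e => (A.ρ e).symm) _ (fun e _ => hdiag e)
    fun e f hef ⟨X, hX, he, hf⟩ => A.disjoint_Se hX he hf hef).trans ?_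
  split_ifs with hYY
  · subst hYY
    have hdisj : ((Ed.hDfin Y hY).toFinset : Set Ed.G.E).PairwiseDisjoint A.Re := by
      rw [Set.Finite.coe_toFinset]
      exact fun e he f hf hef => A.disjoint_Re hY he hf hef
    rw [Finset.inter_self, sum_projOp_of_pairwiseDisjoint _ hdisj, tauV_eq_projOp,
      (A.hR v Y hY hv).1]
    simp only [Set.Finite.mem_toFinset]
  · refine Finset.sum_eq_zero fun e he => absurd ?_ hYY
    rw [Finset.mem_inter, Set.Finite.mem_toFinset, Set.Finite.mem_toFinset] at he
    exact (Ed.hDpart e).unique ⟨hY, he.1⟩ ⟨hY', he.2⟩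

/-- Theorem (Section 6.1): the operators `σ_v, σ_e, σ_{e*}` attached to an
`Ė`-algebraic branching system form an `Ė`-family in `(End_K W)ᵒᵖ`. -/
theorem stmt_19 (K : Type) [Field K] (Ed : BisepGraph) (A : ABSObj Ed) :
    (∀ u v : Ed.G.V, tauV K A u * tauV K A v = if u = v then tauV K A u else 0) ∧
    (∀ e : Ed.G.E,
      tauV K A (Ed.G.s e) * tauE K A e = tauE K A e ∧
      tauE K A e * tauV K A (Ed.G.r e) = tauE K A e ∧
      tauV K A (Ed.G.r e) * tauS K A e = tauS K A e ∧
      tauS K A e * tauV K A (Ed.G.s e) = tauS K A e) ∧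
    (∀ (X X' : Set Ed.G.E) (hX : X ∈ Ed.C) (hX' : X' ∈ Ed.C) (v : Ed.G.V),
      (∀ e ∈ X, Ed.G.s e = v) →
      (∑ e ∈ (Ed.hCfin X hX).toFinset, ∑ f ∈ (Ed.hCfin X' hX').toFinset,
          if ∃ Y ∈ Ed.D, e ∈ Y ∧ f ∈ Y then tauE K A e * tauS K A f else 0) =
        if X = X' then tauV K A v else 0) ∧
    (∀ (Y Y' : Set Ed.G.E) (hY : Y ∈ Ed.D) (hY' : Y' ∈ Ed.D) (v : Ed.G.V),
      (∀ e ∈ Y, Ed.G.r e = v) →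
      (∑ e ∈ (Ed.hDfin Y hY).toFinset, ∑ f ∈ (Ed.hDfin Y' hY').toFinset,
          if ∃ X ∈ Ed.C, e ∈ X ∧ f ∈ X then tauS K A e * tauE K A f else 0) =
        if Y = Y' then tauV K A v else 0) :=
  ⟨tauV_mul_tauV K A,
    fun e => ⟨tauV_mul_tauE K A e, tauE_mul_tauV K A e, tauV_mul_tauS K A e,
      tauS_mul_tauV K A e⟩,
    fun _ _ hX hX' _ hv => sum_sum_tauE_mul_tauS K A hX hX' hv,
    fun _ _ hY hY' _ hv => sum_sum_tauS_mul_tauE K A hY hY' hv⟩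

end
end
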